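/- arXiv:2310.12068 — 2 statements merged into one kernel-verified Lean document; each statement's English description precedes it below -/
import Mathlib

section
/- For a pathwise embedding between synchronization trees of height at most k, being an injective map is equivalent to being an embedding (i.e., additionally reflecting both the unary predicates and the accessibility relation). -/
/-- A (pointed) Kripke model over a set `V` of propositional variables. -/
structure Kripke (V : Type) where
  World : Type
  R : World → World → Prop
  val : V → World → Prop
  pt : World

/-- A homomorphism of Kripke models. -/
structure KHom {V : Type} (A B : Kripke V) where
  toFun : A.World → B.World
  map_rel : ∀ x y, A.R x y → B.R (toFun x) (toFun y)
  map_val : ∀ p x, A.val p x → B.val p (toFun x)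
  map_pt : toFun A.pt = B.pt

namespace KHom

variable {V : Type} {A B C : Kripke V}

/-- Composition of homomorphisms of Kripke models. -/
def comp (g : KHom B C) (f : KHom A B) : KHom A C where
  toFun := g.toFun ∘ f.toFun
  map_rel := fun x y h => g.map_rel _ _ (f.map_rel _ _ h)
  map_val := fun p x h => g.map_val _ _ (f.map_val _ _ h)
  map_pt := by simp [f.map_pt, g.map_pt]

/-- A pathwise embedding: a homomorphism reflecting the unary predicates. -/
def Pathwise (f : KHom A B) : Prop :=
  ∀ p x, B.val p (f.toFun x) → A.val p x

/-- An embedding: an injective homomorphism reflecting the unary predicates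
and the accessibility relation. -/
def IsEmbedding (f : KHom A B) : Prop :=
  Function.Injective f.toFun ∧ f.Pathwise ∧
    ∀ x y, B.R (f.toFun x) (f.toFun y) → A.R x y

/-- A p-morphism: a pathwise embedding satisfying the back condition. -/
def IsPMorphism (f : KHom A B) : Prop :=
  f.Pathwise ∧ ∀ x y, B.R (f.toFun x) y → ∃ x', A.R x x' ∧ f.toFun x' = y

end KHom

/-- `IsPath A l x` : `l` is a finite R-path from the distinguished element of `A` to `x`. -/
def IsPath {V : Type} (A : Kripke V) (l : List A.World) (x : A.World) : Prop :=
  l.head? = some A.pt ∧ l.getLast? = some x ∧ l.Chain' A.R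

/-- A synchronization tree: every element is reachable from the distinguished
element by a unique finite path along the accessibility relation. -/
def IsSyncTree {V : Type} (A : Kripke V) : Prop :=
  ∀ x, ∃! l, IsPath A l x

/-- Height at most `k`: every path from the root makes at most `k` steps
(i.e. has at most `k+1` elements). -/
def HeightLE {V : Type} (A : Kripke V) (k : ℕ∞) : Prop :=
  ∀ l x, IsPath A l x → (l.length : ℕ∞) ≤ k + 1

/-- A path model: the elements form a finite R-chain starting at the
distinguished element, with no other R-edges. -/
def IsPathModel {V : Type} (A : Kripke V) : Prop :=
  ∃ l : List A.World, l ≠ [] ∧ l.Nodup ∧ l.head? = some A.pt ∧ (∀ x, x ∈ l) ∧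
    ∀ x y, A.R x y ↔ ∃ i, l[i]? = some x ∧ l[i + 1]? = some y

/-- Modal formulas. -/
inductive MF (V : Type) where
  | top | bot
  | var (p : V)
  | neg (φ : MF V)
  | and (φ ψ : MF V)
  | or (φ ψ : MF V)
  | box (φ : MF V)
  | dia (φ : MF V)

/-- Kripke semantics of modal formulas. -/
def Sat {V : Type} (A : Kripke V) (w : A.World) : MF V → Prop
  | .top => True
  | .bot => False
  | .var p => A.val p w
  | .neg φ => ¬ Sat A w φ
  | .and φ ψ => Sat A w φ ∧ Sat A w ψ
  | .or φ ψ => Sat A w φ ∨ Sat A w ψ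
  | .box φ => ∀ x, A.R w x → Sat A x φ
  | .dia φ => ∃ x, A.R w x ∧ Sat A x φ

/-- Modal depth: the maximal nesting of modalities. -/
def MF.depth {V : Type} : MF V → ℕ
  | .top => 0
  | .bot => 0
  | .var _ => 0
  | .neg φ => φ.depth
  | .and φ ψ => max φ.depth ψ.depth
  | .or φ ψ => max φ.depth ψ.depth
  | .box φ => φ.depth + 1
  | .dia φ => φ.depth + 1

/-- Existential modal formulas: no `□`, negations only on propositional variables. -/
inductive MF.IsExistential {V : Type} : MF V → Prop
  | top : MF.IsExistential .top
  | bot : MF.IsExistential .bot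
  | var (p : V) : MF.IsExistential (.var p)
  | negvar (p : V) : MF.IsExistential (.neg (.var p))
  | and {φ ψ} : MF.IsExistential φ → MF.IsExistential ψ → MF.IsExistential (.and φ ψ)
  | or {φ ψ} : MF.IsExistential φ → MF.IsExistential ψ → MF.IsExistential (.or φ ψ)
  | dia {φ} : MF.IsExistential φ → MF.IsExistential (.dia φ)

/-- The tree unravelling of a Kripke model to depth `k`. -/
def Unravel {V : Type} (A : Kripke V) (k : ℕ∞) : Kripke V where
  World := { l : List A.World // l ≠ [] ∧ l.head? = some A.pt ∧ l.Chain' A.R ∧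
    (l.length : ℕ∞) ≤ k + 1 }
  R s t := ∃ x, t.val = s.val ++ [x]
  val p s := ∃ x, s.val.getLast? = some x ∧ A.val p x
  pt := ⟨[A.pt], by simp, by simp, List.isChain_singleton _, by simp⟩

/-- The projection from the unravelling, sending a sequence to its last element. -/
def projFun {V : Type} (A : Kripke V) (k : ℕ∞) : (Unravel A k).World → A.World :=
  fun s => s.val.getLast s.prop.1

/-!
If `f x R f y` in `B`, then both the image of the root path to `y` and the image of the root
path to `x` followed by `f y` are paths to `f y`. In a synchronization tree these coincide, so
by injectivity the root path to `y` in `A` is the root path to `x` followed by `y`, whence `x R y`.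
-/

theorem IsPath.map {V : Type} {A B : Kripke V} (f : KHom A B) {l : List A.World} {x : A.World}
    (h : IsPath A l x) : IsPath B (l.map f.toFun) (f.toFun x) := by
  obtain ⟨hhead, hlast, hchain⟩ := h
  refine ⟨?_, ?_, List.isChain_map_of_isChain _ f.map_rel hchain⟩
  · rw [List.head?_map, hhead, Option.map_some, f.map_pt]
  · rw [List.getLast?_map, hlast, Option.map_some]

theorem IsPath.append_singleton {V : Type} {A : Kripke V} {l : List A.World} {x y : A.World}
    (h : IsPath A l x) (hxy : A.R x y) : IsPath A (l ++ [y]) y := by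
  obtain ⟨hhead, hlast, hchain⟩ := h
  refine ⟨by simp [List.head?_append, hhead], by simp, ?_⟩
  exact hchain.append (List.isChain_singleton y) (by simp [hlast, hxy])

theorem IsPath.rel_of_append_singleton {V : Type} {A : Kripke V} {l : List A.World}
    {x y : A.World} (hx : IsPath A l x) (hy : IsPath A (l ++ [y]) y) : A.R x y :=
  (List.isChain_append.1 hy.2.2).2.2 x hx.2.1 y rfl

theorem KHom.rel_of_rel_of_injective {V : Type} {A B : Kripke V}
    (hA : ∀ x, ∃ l, IsPath A l x) (hB : IsSyncTree B) (f : KHom A B)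
    (hinj : Function.Injective f.toFun) {x y : A.World} (hR : B.R (f.toFun x) (f.toFun y)) :
    A.R x y := by
  obtain ⟨lx, hlx⟩ := hA x
  obtain ⟨ly, hly⟩ := hA y
  have hpaths : ly.map f.toFun = (lx ++ [y]).map f.toFun := by
    rw [List.map_append, List.map_singleton]
    exact (hB (f.toFun y)).unique (hly.map f) ((hlx.map f).append_singleton hR)
  have hly_eq : ly = lx ++ [y] := List.map_injective_iff.mpr hinj hpaths
  exact hlx.rel_of_append_singleton (hly_eq ▸ hly)

theorem stmt2_general {V : Type} (A B : Kripke V)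
    (hA : IsSyncTree A) (hB : IsSyncTree B)
    (f : KHom A B) (hf : f.Pathwise) :
    Function.Injective f.toFun ↔ f.IsEmbedding :=
  ⟨fun hinj => ⟨hinj, hf, fun _ _ =>
      f.rel_of_rel_of_injective (fun x => (hA x).exists) hB hinj⟩,
    fun h => h.1⟩

/-- For a pathwise embedding between synchronization trees of height
at most `k`, being injective is equivalent to being an embedding. -/
theorem stmt2 {V : Type} (k : ℕ∞) (A B : Kripke V)
    (hA : IsSyncTree A) (hAk : HeightLE A k) (hB : IsSyncTree B) (hBk : HeightLE B k)
    (f : KHom A B) (hf : f.Pathwise) :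
    Function.Injective f.toFun ↔ f.IsEmbedding :=
  stmt2_general A B hA hB f hf
end

section
/- A subpresheaf of a representable presheaf over the forest poset P_k is representable or empty, and representable presheaves over P_k have no non-trivial quotients; consequently the set of all maps between representable presheaves generates the class of monomorphisms of the presheaf category over P_k. -/
/-! Over a forest, the elements `q` with `G(q)` nonempty form a lower subset of the finite chain
`Iic p`, hence have a greatest element `q₀` and coincide with `Iic q₀`. Since every presheaf in
sight has subsingleton values, a presheaf is determined up to isomorphism by this support, so
`G ≅ yoneda q₀`; and an epimorphism out of a subsingleton-valued presheaf is componentwise a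
surjection out of a subsingleton, hence an isomorphism. -/

open Set Opposite

universe u

section Forest

variable {P : Type*} [PartialOrder P]

lemma IsChain.exists_isGreatest_of_finite {s : Set P} (hc : IsChain (· ≤ ·) s) (hfin : s.Finite)
    (hne : s.Nonempty) : ∃ a, IsGreatest s a := by
  obtain ⟨a, ha⟩ := hfin.exists_maximal hne
  exact ⟨a, ha.prop, fun b hb => (hc.total hb ha.prop).elim id (ha.le_of_ge hb)⟩

lemma IsLowerSet.exists_eq_Iic_of_subset_Iic {p : P} (hfin : (Iic p).Finite)
    (hchain : IsChain (· ≤ ·) (Iic p)) {s : Set P} (hlow : IsLowerSet s) (hsub : s ⊆ Iic p)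
    (hne : s.Nonempty) : ∃ q, s = Iic q := by
  obtain ⟨q, hq, hgreatest⟩ :=
    (hchain.mono hsub).exists_isGreatest_of_finite (hfin.subset hsub) hne
  exact ⟨q, Subset.antisymm (fun _ hx => hgreatest hx) (hlow.Iic_subset hq)⟩

end Forest

namespace CategoryTheory

section SubsingletonValued

variable {C : Type*} [Category C] {F G : C ⥤ Type u}

lemma subsingleton_obj_of_mono (i : F ⟶ G) [Mono i] [∀ X, Subsingleton (G.obj X)] (X : C) :
    Subsingleton (F.obj X) :=
  ((mono_iff_injective (i.app X)).1 inferInstance).subsingleton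

/-- Naturality is automatic between subsingleton-valued functors. -/
noncomputable def isoOfNonemptyIff [∀ X, Subsingleton (F.obj X)] [∀ X, Subsingleton (G.obj X)]
    (h : ∀ X, Nonempty (F.obj X) ↔ Nonempty (G.obj X)) : F ≅ G :=
  NatIso.ofComponents
    (fun X => (equivOfSubsingletonOfSubsingleton (fun x => ((h X).1 ⟨x⟩).some)
      (fun y => ((h X).2 ⟨y⟩).some)).toIso)
    (fun _ => by ext; exact Subsingleton.elim _ _)

lemma isIso_of_epi_of_subsingleton (e : F ⟶ G) [Epi e] [∀ X, Subsingleton (F.obj X)] :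
    IsIso e := by
  rw [NatTrans.isIso_iff_isIso_app]
  intro X
  have hsurj : Function.Surjective (e.app X) :=
    (epi_iff_surjective _).1 ((NatTrans.epi_iff_epi_app e).1 inferInstance X)
  exact (isIso_iff_bijective _).2 ⟨fun _ _ _ => Subsingleton.elim _ _, hsurj⟩

end SubsingletonValued

section Preorder

variable {P : Type u} [Preorder P]

instance (p : P) (r : Pᵒᵖ) : Subsingleton ((yoneda.obj p).obj r) :=
  inferInstanceAs (Subsingleton (r.unop ⟶ p))

lemma nonempty_yoneda_obj_obj_iff {p r : P} : Nonempty ((yoneda.obj p).obj (op r)) ↔ r ≤ p :=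
  ⟨fun ⟨f⟩ => f.le, fun h => ⟨homOfLE h⟩⟩

def presheafSupport (G : Pᵒᵖ ⥤ Type*) : Set P :=
  {q | Nonempty (G.obj (op q))}

lemma isLowerSet_presheafSupport (G : Pᵒᵖ ⥤ Type*) : IsLowerSet (presheafSupport G) :=
  fun _ _ hle ⟨x⟩ => ⟨G.map (homOfLE hle).op x⟩

lemma presheafSupport_subset_Iic {G : Pᵒᵖ ⥤ Type u} {p : P} (i : G ⟶ yoneda.obj p) :
    presheafSupport G ⊆ Iic p :=
  fun _ ⟨x⟩ => nonempty_yoneda_obj_obj_iff.1 ⟨i.app _ x⟩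

end Preorder

end CategoryTheory

open CategoryTheory

/-- Over a forest poset, every subpresheaf of a representable presheaf
is empty or representable, and representable presheaves have no non-trivial quotients
(every epimorphism between representables is an isomorphism). -/
theorem stmt19 (P : Type) [PartialOrder P]
    (hforest : ∀ p : P, {q : P | q ≤ p}.Finite ∧ IsChain (· ≤ ·) {q : P | q ≤ p}) :
    (∀ (p : P) (G : Pᵒᵖ ⥤ Type) (i : G ⟶ yoneda.obj p), Mono i →
      (∀ q : Pᵒᵖ, IsEmpty (G.obj q)) ∨ ∃ q : P, Nonempty (G ≅ yoneda.obj q)) ∧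
    (∀ (p q : P) (e : yoneda.obj p ⟶ yoneda.obj q), Epi e → IsIso e) := by
  refine ⟨fun p G i _ => ?_, fun _ _ e _ => isIso_of_epi_of_subsingleton e⟩
  have := subsingleton_obj_of_mono i
  obtain hempty | hne := (presheafSupport G).eq_empty_or_nonempty
  · exact Or.inl fun q => not_nonempty_iff.1 fun hq => hempty.subset (show q.unop ∈ _ from hq)
  obtain ⟨q, hq⟩ := (isLowerSet_presheafSupport G).exists_eq_Iic_of_subset_Iic (hforest p).1
    (hforest p).2 (presheafSupport_subset_Iic i) hne
  refine Or.inr ⟨q, ⟨isoOfNonemptyIff fun r => ?_⟩⟩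
  exact (Set.ext_iff.1 hq r.unop).trans nonempty_yoneda_obj_obj_iff.symm
end
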